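/- arXiv:2010.07918 — 3 statements merged into one kernel-verified Lean document; each statement's English description precedes it below -/
import Mathlib

section
/- For every n_0 ∈ ℕ, 𝐧 = (n_1,…,n_r) ∈ ℕ^r and every m ∈ ℕ, the level set of Γ_{n_0,𝐧} decomposes as a Minkowski sum: π_1([Γ_{n_0,𝐧}]_m) = π_1([Γ_{n_0,𝟎}]_m) + π_1([Γ_{0,n_1𝐞_1}]_m) + ⋯ + π_1([Γ_{0,n_r𝐞_r}]_m), where the sums on the right are Minkowski sums of finite subsets of ℕ^d. -/
open Filter MvPolynomial Pointwise MeasureTheory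

noncomputable section

/-- The graded irrelevant (maximal graded) ideal `𝔪 = (x_1, …, x_d)` of `𝕜[x_1, …, x_d]`. -/
def mId (𝕜 : Type*) [Field 𝕜] (d : ℕ) : Ideal (MvPolynomial (Fin d) 𝕜) :=
  Ideal.span (Set.range MvPolynomial.X)

/-- A graded family of ideals: `I 0 = R` and `I i * I j ⊆ I (i + j)`. -/
def IsGradedFamily {R : Type*} [CommSemiring R] (I : ℕ → Ideal R) : Prop :=
  I 0 = ⊤ ∧ ∀ i j : ℕ, I i * I j ≤ I (i + j)

/-- An `𝔪`-primary ideal of the polynomial ring: a proper ideal containing a power of `𝔪`. -/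
def IsMPrimary {𝕜 : Type*} [Field 𝕜] {d : ℕ} (I : Ideal (MvPolynomial (Fin d) 𝕜)) : Prop :=
  I ≠ ⊤ ∧ ∃ k : ℕ, mId 𝕜 d ^ k ≤ I

/-- A monomial ideal: an ideal generated by monomials. -/
def IsMonomialIdeal {𝕜 : Type*} [Field 𝕜] {d : ℕ} (I : Ideal (MvPolynomial (Fin d) 𝕜)) : Prop :=
  ∃ S : Set (Fin d →₀ ℕ), I = Ideal.span ((fun m => MvPolynomial.monomial m (1 : 𝕜)) '' S)

/-- A nonzero monomial ideal generated by monomials of degree at most `b`;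
for nonzero monomial ideals this is exactly the condition `β(I) ≤ b`. -/
def IsMonomialBounded {𝕜 : Type*} [Field 𝕜] {d : ℕ} (I : Ideal (MvPolynomial (Fin d) 𝕜))
    (b : ℕ) : Prop :=
  I ≠ ⊥ ∧ ∃ S : Set (Fin d →₀ ℕ), (∀ m ∈ S, (∑ j, m j) ≤ b) ∧
    I = Ideal.span ((fun m => MvPolynomial.monomial m (1 : 𝕜)) '' S)

/-- The `𝕜`-vector space dimension of the quotient `A / (A ⊓ B)`; for `B ⊆ A`
this is `dim_𝕜 (A / B)`. -/
def quotDim (𝕜 : Type*) [Field 𝕜] {R : Type*} [CommRing R] [Algebra 𝕜 R]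
    (A B : Ideal R) : ℕ :=
  Module.finrank 𝕜
    (↥(Submodule.restrictScalars 𝕜 A) ⧸
      Submodule.comap (Submodule.restrictScalars 𝕜 A).subtype (Submodule.restrictScalars 𝕜 B))

/-- The semigroup `Γ_{n₀,𝐧} = {(𝐦,m) ∈ ℕ^d × ℕ : x^𝐦 ∈ 𝐉_{m𝐧}, |𝐦| ≤ c m (n₀+|𝐧|)}`. -/
def GammaSet (𝕜 : Type*) [Field 𝕜] {d r : ℕ}
    (J : Fin r → ℕ → Ideal (MvPolynomial (Fin d) 𝕜)) (c n0 : ℕ) (n : Fin r → ℕ) :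
    Set ((Fin d →₀ ℕ) × ℕ) :=
  {q | MvPolynomial.monomial q.1 (1 : 𝕜) ∈ ∏ i, J i (q.2 * n i) ∧
    (∑ j, q.1 j) ≤ c * q.2 * (n0 + ∑ i, n i)}

/-- The semigroup `Γ̂_{n₀,𝐧} = {(𝐦,m) : x^𝐦 ∈ I_{m n₀}𝐉_{m𝐧}, |𝐦| ≤ c m (n₀+|𝐧|)}`. -/
def GammaHatSet (𝕜 : Type*) [Field 𝕜] {d r : ℕ}
    (I : ℕ → Ideal (MvPolynomial (Fin d) 𝕜))
    (J : Fin r → ℕ → Ideal (MvPolynomial (Fin d) 𝕜)) (c n0 : ℕ) (n : Fin r → ℕ) :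
    Set ((Fin d →₀ ℕ) × ℕ) :=
  {q | MvPolynomial.monomial q.1 (1 : 𝕜) ∈ I (q.2 * n0) * ∏ i, J i (q.2 * n i) ∧
    (∑ j, q.1 j) ≤ c * q.2 * (n0 + ∑ i, n i)}

/-- The level set `π₁([S]_m)` of a subset `S ⊆ ℕ^d × ℕ`. -/
def levelSet {d : ℕ} (S : Set ((Fin d →₀ ℕ) × ℕ)) (m : ℕ) : Set (Fin d →₀ ℕ) :=
  {q | (q, m) ∈ S}

/-- The embedding `ℕ^d × ℕ → ℝ^d × ℝ`. -/
def embedReal {d : ℕ} (q : (Fin d →₀ ℕ) × ℕ) : (Fin d → ℝ) × ℝ :=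
  ((fun j => (q.1 j : ℝ)), (q.2 : ℝ))

/-- `Con(S)`: the closure of the set of all non-negative real linear combinations of
elements of `S ⊆ ℝ^d × ℝ`. -/
def coneOf {d : ℕ} (S : Set ((Fin d → ℝ) × ℝ)) : Set ((Fin d → ℝ) × ℝ) :=
  closure {x | ∃ (k : ℕ) (a : Fin k → ℝ) (v : Fin k → (Fin d → ℝ) × ℝ),
    (∀ j, 0 ≤ a j) ∧ (∀ j, v j ∈ S) ∧ x = ∑ j, a j • v j}

/-- The Newton–Okounkov body `Δ(S) = Con(S) ∩ π^{-1}(1)` of `S ⊆ ℕ^d × ℕ`,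
where `π` is the projection to the last coordinate. -/
def newtonBody {d : ℕ} (S : Set ((Fin d →₀ ℕ) × ℕ)) : Set ((Fin d → ℝ) × ℝ) :=
  {x | x ∈ coneOf (embedReal '' S) ∧ x.2 = 1}

/-- `Vol_d(Δ(S))`: the `d`-dimensional Lebesgue volume of `π₁(Δ(S))`. -/
def volDelta {d : ℕ} (S : Set ((Fin d →₀ ℕ) × ℕ)) : ℝ :=
  (MeasureTheory.volume (Prod.fst '' newtonBody S)).toReal

/-!
Each `J(i)_k` is spanned by monomials of degree at most `βk ≤ ck`. Hence `π₁([Γ_{n₀,𝐧}]_m)` is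
the set of exponents of degree at most `cm(n₀+|𝐧|)` dominating a sum `t₁ + ⋯ + t_r` of
generators of the `J(i)_{mn_i}`, and each right-hand summand is described in the same way with
degree bound `cmn₀` resp. `cmn_i`. Since every `t_i` fits within its own bound `cmn_i`, the excess
degree of such an exponent over `t₁ + ⋯ + t_r` can be distributed among the slacks
`cmn₀` and `cmn_i - |t_i|`, which gives the Minkowski decomposition.
-/

namespace Finsupp

variable {σ : Type*}

theorem exists_add_eq_of_degree_le_add {b : σ →₀ ℕ} {A B : ℕ} (h : b.degree ≤ A + B) :
    ∃ b₀ b₁, b₀ + b₁ = b ∧ b₀.degree ≤ A ∧ b₁.degree ≤ B := by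
  obtain ⟨g, hgb, hg⟩ := exists_le_degree_eq b (min A b.degree) (min_le_right _ _)
  have hdeg := congrArg degree (add_tsub_cancel_of_le hgb)
  rw [map_add] at hdeg
  exact ⟨g, b - g, add_tsub_cancel_of_le hgb, by omega, by omega⟩

theorem degree_le_sum_of_mem_finsetSum {ι : Type*} {s : Finset ι} {T : ι → Set (σ →₀ ℕ)}
    {N : ι → ℕ} (hT : ∀ i ∈ s, ∀ t ∈ T i, t.degree ≤ N i) {t : σ →₀ ℕ}
    (ht : t ∈ ∑ i ∈ s, T i) : t.degree ≤ ∑ i ∈ s, N i := by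
  obtain ⟨g, hg, rfl⟩ := (Set.mem_finsetSum s T t).1 ht
  rw [map_sum]
  exact Finset.sum_le_sum fun i hi => hT i hi _ (hg hi)

def truncUpperClosure (T : Set (σ →₀ ℕ)) (N : ℕ) : Set (σ →₀ ℕ) :=
  ↑(upperClosure T) ∩ {q | q.degree ≤ N}

theorem mem_truncUpperClosure {T : Set (σ →₀ ℕ)} {N : ℕ} {q : σ →₀ ℕ} :
    q ∈ truncUpperClosure T N ↔ (∃ t ∈ T, t ≤ q) ∧ q.degree ≤ N := by
  rw [truncUpperClosure, Set.mem_inter_iff, SetLike.mem_coe, mem_upperClosure, Set.mem_ofPred_eq]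

theorem truncUpperClosure_add {T₀ T₁ : Set (σ →₀ ℕ)} {N₀ N₁ : ℕ}
    (h₀ : ∀ t ∈ T₀, t.degree ≤ N₀) (h₁ : ∀ t ∈ T₁, t.degree ≤ N₁) :
    truncUpperClosure T₀ N₀ + truncUpperClosure T₁ N₁ =
      truncUpperClosure (T₀ + T₁) (N₀ + N₁) := by
  ext q
  simp only [Set.mem_add, mem_truncUpperClosure]
  constructor
  · rintro ⟨q₀, ⟨⟨t₀, ht₀, hle₀⟩, hq₀⟩, q₁, ⟨⟨t₁, ht₁, hle₁⟩, hq₁⟩, rfl⟩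
    exact ⟨⟨t₀ + t₁, ⟨t₀, ht₀, t₁, ht₁, rfl⟩, add_le_add hle₀ hle₁⟩, by rw [map_add]; omega⟩
  · rintro ⟨⟨_, ⟨t₀, ht₀, t₁, ht₁, rfl⟩, hle⟩, hq⟩
    have hdeg := congrArg degree (add_tsub_cancel_of_le hle)
    simp only [map_add] at hdeg
    have := h₀ t₀ ht₀
    have := h₁ t₁ ht₁
    obtain ⟨b₀, b₁, hb, hb₀, hb₁⟩ := exists_add_eq_of_degree_le_add
      (b := q - (t₀ + t₁)) (A := N₀ - t₀.degree) (B := N₁ - t₁.degree) (by omega)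
    refine ⟨t₀ + b₀, ⟨⟨t₀, ht₀, le_self_add⟩, ?_⟩, t₁ + b₁, ⟨⟨t₁, ht₁, le_self_add⟩, ?_⟩, ?_⟩
    · rw [map_add]; omega
    · rw [map_add]; omega
    · rw [add_add_add_comm, hb, add_tsub_cancel_of_le hle]

theorem truncUpperClosure_finsetSum {ι : Type*} (s : Finset ι) {T : ι → Set (σ →₀ ℕ)}
    {N : ι → ℕ} (hT : ∀ i ∈ s, ∀ t ∈ T i, t.degree ≤ N i) :
    ∑ i ∈ s, truncUpperClosure (T i) (N i) =
      truncUpperClosure (∑ i ∈ s, T i) (∑ i ∈ s, N i) := by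
  classical
  induction s using Finset.induction_on with
  | empty =>
    ext q
    simp [mem_truncUpperClosure, degree_eq_zero_iff]
  | insert i s hi ih =>
    have hTs := fun j hj => hT j (Finset.mem_insert_of_mem hj)
    rw [Finset.sum_insert hi, Finset.sum_insert hi, Finset.sum_insert hi, ih hTs,
      truncUpperClosure_add (hT i (Finset.mem_insert_self i s))
        fun t ht => degree_le_sum_of_mem_finsetSum hTs ht]

end Finsupp

namespace MvPolynomial

variable {σ R : Type*} [CommSemiring R]

theorem image_monomial_one_add (S T : Set (σ →₀ ℕ)) :
    (fun s => monomial s (1 : R)) '' (S + T) =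
      (fun s => monomial s (1 : R)) '' S * (fun s => monomial s (1 : R)) '' T := by
  simp only [← Set.image2_add, ← Set.image2_mul, Set.image_image2, Set.image2_image_left,
    Set.image2_image_right, monomial_mul, one_mul]

theorem prod_span_monomial_one_image {ι : Type*} (s : Finset ι) (S : ι → Set (σ →₀ ℕ)) :
    ∏ i ∈ s, Ideal.span ((fun t => monomial t (1 : R)) '' S i) =
      Ideal.span ((fun t => monomial t (1 : R)) '' ∑ i ∈ s, S i) := by
  classical
  induction s using Finset.induction_on with
  | empty => simp [← Set.singleton_zero]
  | insert i s hi ih =>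
    rw [Finset.prod_insert hi, Finset.sum_insert hi, ih, Ideal.span_mul_span',
      image_monomial_one_add]

theorem monomial_one_mem_span_monomial_one_image [Nontrivial R] {q : σ →₀ ℕ}
    {T : Set (σ →₀ ℕ)} :
    monomial q (1 : R) ∈ Ideal.span ((fun t => monomial t (1 : R)) '' T) ↔ ∃ t ∈ T, t ≤ q := by
  classical
  rw [mem_ideal_span_monomial_image, support_monomial, if_neg one_ne_zero]
  simp

end MvPolynomial

open Finsupp in
theorem levelSet_gammaSet_eq_truncUpperClosure {𝕜 : Type*} [Field 𝕜] {d r : ℕ}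
    {J : Fin r → ℕ → Ideal (MvPolynomial (Fin d) 𝕜)} {S : Fin r → ℕ → Set (Fin d →₀ ℕ)}
    (hS : ∀ i k, J i k = Ideal.span ((fun s => monomial s (1 : 𝕜)) '' S i k))
    (c a : ℕ) (b : Fin r → ℕ) (m : ℕ) :
    levelSet (GammaSet 𝕜 J c a b) m =
      truncUpperClosure (∑ j, S j (m * b j)) (c * m * (a + ∑ j, b j)) := by
  ext q
  simp only [levelSet, GammaSet, Set.mem_ofPred_eq, mem_truncUpperClosure, degree_eq_sum, hS,
    prod_span_monomial_one_image, monomial_one_mem_span_monomial_one_image]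

theorem statement7_general {𝕜 : Type*} [Field 𝕜] (d r : ℕ)
    (J : Fin r → ℕ → Ideal (MvPolynomial (Fin d) 𝕜)) (β c : ℕ)
    (hJb : ∀ i n, IsMonomialBounded (J i n) (β * n))
    (hc : β < c) :
    ∀ (n0 : ℕ) (n : Fin r → ℕ) (m : ℕ),
      levelSet (GammaSet 𝕜 J c n0 n) m =
        levelSet (GammaSet 𝕜 J c n0 (fun _ => 0)) m +
          ∑ i : Fin r, levelSet (GammaSet 𝕜 J c 0 (Pi.single i (n i))) m := by
  intro n0 n m
  choose S hSdeg hSspan using fun i k => (hJb i k).2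
  have hS0 : ∀ i, S i 0 = 0 := by
    intro i
    have hsub : S i 0 ⊆ {0} := fun s hs =>
      (Finsupp.degree_eq_zero_iff s).1 (by simpa [Finsupp.degree_eq_sum] using hSdeg i 0 s hs)
    refine (Set.Nonempty.subset_singleton_iff ?_).1 hsub
    refine Set.nonempty_iff_ne_empty.2 fun hempty => (hJb i 0).1 ?_
    rw [hSspan, hempty, Set.image_empty, Ideal.span_empty]
  have hSsingle : ∀ i, ∑ j, S j (m * (Pi.single i (n i) : Fin r → ℕ) j) = S i (m * n i) := by
    intro i
    rw [Finset.sum_eq_single_of_mem i (Finset.mem_univ i) fun j _ hji => ?_, Pi.single_eq_same]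
    rw [Pi.single_eq_of_ne hji, mul_zero, hS0]
  have hSbound : ∀ i ∈ Finset.univ, ∀ t ∈ S i (m * n i), t.degree ≤ c * m * n i := by
    intro i _ t ht
    rw [Finsupp.degree_eq_sum, mul_assoc]
    exact (hSdeg i _ t ht).trans (Nat.mul_le_mul_right _ hc.le)
  simp only [levelSet_gammaSet_eq_truncUpperClosure hSspan, mul_zero, hS0, hSsingle,
    Finset.sum_const_zero, add_zero, zero_add, Finset.sum_pi_single', Finset.mem_univ, if_true]
  rw [Finsupp.truncUpperClosure_finsetSum _ hSbound,
    Finsupp.truncUpperClosure_add (by simp)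
      (fun _ => Finsupp.degree_le_sum_of_mem_finsetSum hSbound),
    zero_add, mul_add, Finset.mul_sum]

/-- **Levelwise decomposition of `Γ_{n₀,𝐧}`.**
For every `n₀, 𝐧` and every level `m`, `π₁([Γ_{n₀,𝐧}]_m)` is the Minkowski sum of
`π₁([Γ_{n₀,𝟎}]_m)` and the sets `π₁([Γ_{0,n_i 𝐞_i}]_m)`, `1 ≤ i ≤ r`. -/
theorem statement7 {𝕜 : Type*} [Field 𝕜] (d r : ℕ) (hd : 0 < d)
    (I : ℕ → Ideal (MvPolynomial (Fin d) 𝕜))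
    (J : Fin r → ℕ → Ideal (MvPolynomial (Fin d) 𝕜)) (β c : ℕ)
    (hI : IsGradedFamily I)
    (hImon : ∀ n, IsMonomialIdeal (I n))
    (hIprim : ∀ n, 0 < n → IsMPrimary (I n))
    (hJ : ∀ i, IsGradedFamily (J i))
    (hJb : ∀ i n, IsMonomialBounded (J i n) (β * n))
    (hc : β < c)
    (hcap : ∀ (n0 : ℕ) (n : Fin r → ℕ),
      mId 𝕜 d ^ (c * (n0 + ∑ i, n i)) ⊓ (∏ i, J i (n i)) =
        mId 𝕜 d ^ (c * (n0 + ∑ i, n i)) ⊓ (I n0 * ∏ i, J i (n i))) :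
    ∀ (n0 : ℕ) (n : Fin r → ℕ) (m : ℕ),
      levelSet (GammaSet 𝕜 J c n0 n) m =
        levelSet (GammaSet 𝕜 J c n0 (fun _ => 0)) m +
          ∑ i : Fin r, levelSet (GammaSet 𝕜 J c 0 (Pi.single i (n i))) m :=
  statement7_general d r J β c hJb hc
end
end

section
/- For a > 0 let 𝕀_a = {I_{a,n}} be the Noetherian graded family generated by I_1,…,I_a (so I_{a,n} = I_n for n ≤ a and I_{a,n} = Σ_{i=1}^{n−1} I_{a,i}I_{a,n−i} for n > a), and define 𝕁(i)_a = {J(i)_{a,n}} likewise; set 𝐉_{a,𝐧} = J(1)_{a,n_1}⋯J(r)_{a,n_r}, Γ_{a,n_0,𝐧} = {(𝐦,m) ∈ ℕ^d×ℕ : x^𝐦 ∈ 𝐉_{a,m𝐧} and |𝐦| ≤ cm(n_0+|𝐧|)} and Γ̂_{a,n_0,𝐧} = {(𝐦,m) : x^𝐦 ∈ I_{a,m n_0}𝐉_{a,m𝐧} and |𝐦| ≤ cm(n_0+|𝐧|)}. Then for fixed n_0 ∈ ℕ, 𝐧 ∈ ℕ^r and ε > 0 there exists a_0 ∈ ℕ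 such that for all a ≥ a_0: Vol_d(Δ(Γ_{n_0,𝐧})) ≥ Vol_d(Δ(Γ_{a,n_0,𝐧})) ≥ Vol_d(Δ(Γ_{n_0,𝐧})) − ε, and Vol_d(Δ(Γ̂_{n_0,𝐧})) ≥ Vol_d(Δ(Γ̂_{a,n_0,𝐧})) ≥ Vol_d(Δ(Γ̂_{n_0,𝐧})) − ε. -/
/-!
The truncated families increase with `a` and agree with the original ones in degrees `≤ a`, so the
semigroups `Γ_{a,n₀,𝐧}` increase with union `Γ_{n₀,𝐧}` (and likewise for `Γ̂`). The slices at
height one of the cones over `Γ_{a,n₀,𝐧}` are convex, increasing, and their union is dense in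
`Δ(Γ_{n₀,𝐧})`, which lies in the cube `[0, c(n₀+|𝐧|)]^d`. Convex sets have Lebesgue-null frontier,
so continuity of measure from below gives `Vol_d(Δ(Γ_{a,n₀,𝐧})) → Vol_d(Δ(Γ_{n₀,𝐧}))`.
-/

open Filter MvPolynomial Pointwise MeasureTheory

noncomputable section

open scoped Topology

section Truncation

variable {R : Type*} [CommSemiring R] {J : ℕ → Ideal R} {Jt : ℕ → ℕ → Ideal R}

theorem truncation_le (hJ : ∀ i j, J i * J j ≤ J (i + j))
    (h1 : ∀ a n, n ≤ a → Jt a n = J n)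
    (h2 : ∀ a n, a < n → Jt a n = ∑ i ∈ Finset.Ioo 0 n, Jt a i * Jt a (n - i))
    (a : ℕ) : Jt a ≤ J := by
  intro n
  induction n using Nat.strong_induction_on with
  | _ n ih =>
    rcases le_or_gt n a with hna | hna
    · exact (h1 a n hna).le
    rw [h2 a n hna, Ideal.sum_eq_sup]
    refine Finset.sup_le fun i hi => ?_
    obtain ⟨hi0, hin⟩ := Finset.mem_Ioo.1 hi
    calc Jt a i * Jt a (n - i) ≤ J i * J (n - i) := Ideal.mul_mono (ih i hin) (ih _ (by omega))
      _ ≤ J (i + (n - i)) := hJ i (n - i)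
      _ = J n := by rw [Nat.add_sub_cancel' hin.le]

theorem truncation_monotone (hJ : ∀ i j, J i * J j ≤ J (i + j))
    (h1 : ∀ a n, n ≤ a → Jt a n = J n)
    (h2 : ∀ a n, a < n → Jt a n = ∑ i ∈ Finset.Ioo 0 n, Jt a i * Jt a (n - i)) :
    Monotone Jt := by
  intro a a' haa n
  induction n using Nat.strong_induction_on with
  | _ n ih =>
    rcases le_or_gt n a' with hna' | hna'
    · exact (truncation_le hJ h1 h2 a n).trans (h1 a' n hna').ge
    rw [h2 a n (haa.trans_lt hna'), h2 a' n hna']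
    refine Finset.sum_le_sum fun i hi => ?_
    obtain ⟨hi0, hin⟩ := Finset.mem_Ioo.1 hi
    exact Ideal.mul_mono (ih i hin) (ih _ (by omega))

end Truncation

section Cone

theorem setOf_nonneg_combination_eq_hull {E : Type*} [AddCommGroup E] [Module ℝ E] (S : Set E) :
    {x | ∃ (k : ℕ) (a : Fin k → ℝ) (v : Fin k → E),
      (∀ j, 0 ≤ a j) ∧ (∀ j, v j ∈ S) ∧ x = ∑ j, a j • v j} = (PointedCone.hull ℝ S : Set E) := by
  ext x
  rw [SetLike.mem_coe, Submodule.mem_span_set']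
  constructor
  · rintro ⟨k, a, v, ha, hv, rfl⟩
    exact ⟨k, fun j => ⟨a j, ha j⟩, fun j => ⟨v j, hv j⟩, rfl⟩
  · rintro ⟨k, a, v, rfl⟩
    exact ⟨k, fun j => a j, fun j => v j, fun j => (a j).2, fun j => (v j).2, rfl⟩

theorem coneOf_eq_closure_hull {d : ℕ} (S : Set ((Fin d → ℝ) × ℝ)) :
    coneOf S = closure (PointedCone.hull ℝ S) :=
  congrArg closure (setOf_nonneg_combination_eq_hull S)

theorem mem_closure_inter_snd_eq_one {E : Type*} [AddCommGroup E] [Module ℝ E]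
    [TopologicalSpace E] [ContinuousSMul ℝ E] (C : PointedCone ℝ (E × ℝ)) {x : E × ℝ}
    (hx : x ∈ closure (C : Set (E × ℝ))) (hx1 : x.2 = 1) :
    x ∈ closure ((C : Set (E × ℝ)) ∩ {y | y.2 = 1}) := by
  set f : E × ℝ → E × ℝ := fun y => y.2⁻¹ • y
  have hfx : f x = x := by simp [f, hx1]
  have hf : ContinuousAt f x :=
    (continuous_snd.continuousAt.inv₀ (by simp [hx1])).smul continuousAt_id
  have hpos : x ∈ closure ((C : Set (E × ℝ)) ∩ {y | 0 < y.2}) := by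
    rw [Set.inter_comm]
    exact (isOpen_lt continuous_const continuous_snd).inter_closure ⟨by simp [hx1], hx⟩
  rw [← hfx]
  refine closure_mono ?_ (mem_closure_image hf hpos)
  rintro _ ⟨y, ⟨hyC, hy : 0 < y.2⟩, rfl⟩
  exact ⟨C.smul_mem (inv_nonneg.2 hy.le) hyC, by simp [f, hy.ne']⟩

end Cone

theorem measure_le_iSup_of_subset_closure_iUnion {E : Type*} [NormedAddCommGroup E]
    [NormedSpace ℝ E] [MeasurableSpace E] [BorelSpace E] [FiniteDimensional ℝ E]
    (μ : Measure E) [μ.IsAddHaarMeasure] {Q : ℕ → Set E} (hQ : Monotone Q)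
    (hconv : ∀ a, Convex ℝ (Q a)) {D : Set E} (hD : D ⊆ closure (⋃ a, Q a)) :
    μ D ≤ ⨆ a, μ (Q a) := by
  have hU : Convex ℝ (⋃ a, Q a) := hQ.directed_le.convex_iUnion hconv
  calc μ D ≤ μ (closure (⋃ a, Q a)) := measure_mono hD
    _ ≤ μ (⋃ a, Q a) + μ (frontier (⋃ a, Q a)) := by
      rw [closure_eq_self_union_frontier]
      exact measure_union_le _ _
    _ = ⨆ a, μ (Q a) := by rw [hU.addHaar_frontier μ, add_zero, hQ.measure_iUnion]

section NewtonBody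

variable {d : ℕ}

theorem newtonBody_eq (S : Set ((Fin d →₀ ℕ) × ℕ)) :
    newtonBody S = closure (PointedCone.hull ℝ (embedReal '' S) : Set _) ∩ {y | y.2 = 1} := by
  simp only [newtonBody, coneOf_eq_closure_hull]
  rfl

theorem newtonBody_mono {S T : Set ((Fin d →₀ ℕ) × ℕ)} (h : S ⊆ T) :
    newtonBody S ⊆ newtonBody T := by
  rw [newtonBody_eq, newtonBody_eq]
  exact Set.inter_subset_inter_left _ (closure_mono (Submodule.span_mono (Set.image_mono h)))

theorem hull_embedReal_subset {M : ℕ} {S : Set ((Fin d →₀ ℕ) × ℕ)}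
    (hS : ∀ q ∈ S, ∑ j, q.1 j ≤ M * q.2) :
    (PointedCone.hull ℝ (embedReal '' S) : Set ((Fin d → ℝ) × ℝ)) ⊆
      {x | (∀ j, 0 ≤ x.1 j) ∧ ∑ j, x.1 j ≤ M * x.2} := by
  intro x hx
  induction hx using Submodule.span_induction with
  | mem x hx =>
    obtain ⟨q, hq, rfl⟩ := hx
    refine ⟨fun j => Nat.cast_nonneg _, ?_⟩
    simp only [embedReal]
    exact_mod_cast hS q hq
  | zero => simp
  | add x y _ _ hx hy =>
    refine ⟨fun j => add_nonneg (hx.1 j) (hy.1 j), ?_⟩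
    simp only [Prod.fst_add, Prod.snd_add, Pi.add_apply, Finset.sum_add_distrib, mul_add]
    exact add_le_add hx.2 hy.2
  | smul t x _ hx =>
    obtain ⟨t, ht⟩ := t
    refine ⟨fun j => mul_nonneg ht (hx.1 j), ?_⟩
    have := mul_le_mul_of_nonneg_left hx.2 ht
    simp only [Nonneg.mk_smul, Prod.smul_fst, Prod.smul_snd, Pi.smul_apply, smul_eq_mul,
      ← Finset.mul_sum] at this ⊢
    linarith

theorem fst_newtonBody_subset_pi_Icc {M : ℕ} {S : Set ((Fin d →₀ ℕ) × ℕ)}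
    (hS : ∀ q ∈ S, ∑ j, q.1 j ≤ M * q.2) :
    Prod.fst '' newtonBody S ⊆ Set.univ.pi fun _ => Set.Icc 0 (M : ℝ) := by
  have hclosed : IsClosed {x : (Fin d → ℝ) × ℝ | (∀ j, 0 ≤ x.1 j) ∧ ∑ j, x.1 j ≤ M * x.2} := by
    simp only [Set.ofPred_and, Set.ofPred_forall]
    exact (isClosed_iInter fun j => isClosed_le continuous_const (by fun_prop)).inter
      (isClosed_le (by fun_prop) (by fun_prop))
  rintro _ ⟨x, hx, rfl⟩ j -
  rw [newtonBody_eq] at hx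
  obtain ⟨hnonneg, hsum⟩ := closure_minimal (hull_embedReal_subset hS) hclosed hx.1
  refine ⟨hnonneg j, ?_⟩
  calc x.1 j ≤ ∑ i, x.1 i := Finset.single_le_sum (fun i _ => hnonneg i) (Finset.mem_univ j)
    _ ≤ M := by rwa [hx.2, mul_one] at hsum

theorem volume_fst_newtonBody_ne_top {M : ℕ} {S : Set ((Fin d →₀ ℕ) × ℕ)}
    (hS : ∀ q ∈ S, ∑ j, q.1 j ≤ M * q.2) : volume (Prod.fst '' newtonBody S) ≠ ⊤ :=
  ne_top_of_le_ne_top (isCompact_univ_pi fun _ => isCompact_Icc).measure_lt_top.ne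
    (measure_mono (fst_newtonBody_subset_pi_Icc hS))

theorem fst_newtonBody_iUnion_subset_closure {S : ℕ → Set ((Fin d →₀ ℕ) × ℕ)}
    (hS : Monotone S) :
    Prod.fst '' newtonBody (⋃ a, S a) ⊆ closure (⋃ a,
      Prod.fst '' ((PointedCone.hull ℝ (embedReal '' S a) : Set ((Fin d → ℝ) × ℝ)) ∩
        {y | y.2 = 1})) := by
  have hmono : Monotone fun a => PointedCone.hull ℝ (embedReal '' S a) :=
    fun a b h => Submodule.span_mono (Set.image_mono (hS h))
  rintro _ ⟨x, hx, rfl⟩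
  rw [newtonBody_eq, Set.image_iUnion, PointedCone.hull, Submodule.span_iUnion] at hx
  have hslice := mem_closure_inter_snd_eq_one _ hx.1 hx.2
  rw [Submodule.coe_iSup_of_directed _ hmono.directed_le, Set.iUnion_inter] at hslice
  simpa only [Set.image_iUnion] using
    image_closure_subset_closure_image continuous_fst ⟨x, hslice, rfl⟩

end NewtonBody

section Approximation

variable {d : ℕ} {S : ℕ → Set ((Fin d →₀ ℕ) × ℕ)}

/-- The slices of the cones over `S a` are convex with union dense in `Δ(⋃ a, S a)`, and convex
sets have null frontier. -/
theorem tendsto_volDelta_iUnion {M : ℕ} (hS : Monotone S)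
    (hbound : ∀ q ∈ ⋃ a, S a, ∑ j, q.1 j ≤ M * q.2) :
    Tendsto (fun a => volDelta (S a)) atTop (𝓝 (volDelta (⋃ a, S a))) := by
  set Q : ℕ → Set (Fin d → ℝ) := fun a =>
    Prod.fst '' ((PointedCone.hull ℝ (embedReal '' S a) : Set ((Fin d → ℝ) × ℝ)) ∩ {y | y.2 = 1})
  have hQconv : ∀ a, Convex ℝ (Q a) := fun a =>
    ((PointedCone.convex _).inter
      (convex_hyperplane (LinearMap.snd ℝ (Fin d → ℝ) ℝ).isLinear 1)).linear_image
      (LinearMap.fst ℝ _ ℝ)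
  have hQmono : Monotone Q := fun a b h =>
    Set.image_mono (Set.inter_subset_inter_left _ (Submodule.span_mono (Set.image_mono (hS h))))
  have hQsub : ∀ a, Q a ⊆ Prod.fst '' newtonBody (S a) := fun a => by
    rw [newtonBody_eq]
    exact Set.image_mono (Set.inter_subset_inter_left _ subset_closure)
  have hsub : ∀ a, Prod.fst '' newtonBody (S a) ⊆ Prod.fst '' newtonBody (⋃ a, S a) := fun a =>
    Set.image_mono (newtonBody_mono (Set.subset_iUnion S a))
  have hsup : ⨆ a, volume (Prod.fst '' newtonBody (S a)) =
      volume (Prod.fst '' newtonBody (⋃ a, S a)) :=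
    le_antisymm (iSup_le fun a => measure_mono (hsub a))
      ((measure_le_iSup_of_subset_closure_iUnion volume hQmono hQconv
        (fst_newtonBody_iUnion_subset_closure hS)).trans
        (iSup_mono fun a => measure_mono (hQsub a)))
  have hmono : Monotone fun a => volume (Prod.fst '' newtonBody (S a)) := fun a b h =>
    measure_mono (Set.image_mono (newtonBody_mono (hS h)))
  have := tendsto_atTop_iSup hmono
  rw [hsup] at this
  exact (ENNReal.tendsto_toReal (volume_fst_newtonBody_ne_top hbound)).comp this

theorem volDelta_le_volDelta_iUnion {M : ℕ} (hbound : ∀ q ∈ ⋃ a, S a, ∑ j, q.1 j ≤ M * q.2)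
    (a : ℕ) : volDelta (S a) ≤ volDelta (⋃ a, S a) :=
  ENNReal.toReal_mono (volume_fst_newtonBody_ne_top hbound)
    (measure_mono (Set.image_mono (newtonBody_mono (Set.subset_iUnion S a))))

theorem exists_volDelta_approx {M : ℕ} (hS : Monotone S)
    (hbound : ∀ q ∈ ⋃ a, S a, ∑ j, q.1 j ≤ M * q.2) {ε : ℝ} (hε : 0 < ε) :
    ∃ a0, ∀ a, a0 ≤ a → volDelta (⋃ a, S a) ≥ volDelta (S a) ∧
      volDelta (S a) ≥ volDelta (⋃ a, S a) - ε := by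
  obtain ⟨a0, ha0⟩ := eventually_atTop.1
    ((tendsto_volDelta_iUnion hS hbound).eventually_const_lt (sub_lt_self _ hε))
  exact ⟨a0, fun a ha => ⟨volDelta_le_volDelta_iUnion hbound a, (ha0 a ha).le⟩⟩

end Approximation

section Gamma

variable {𝕜 : Type*} [Field 𝕜] {d r c n0 : ℕ} {n : Fin r → ℕ}

theorem gammaSet_eq_gammaHatSet_top (J : Fin r → ℕ → Ideal (MvPolynomial (Fin d) 𝕜)) :
    GammaSet 𝕜 J c n0 n = GammaHatSet 𝕜 (fun _ => ⊤) J c n0 n := by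
  ext q
  simp only [GammaSet, GammaHatSet, Set.mem_ofPred_eq, Ideal.top_mul]

theorem gammaHatSet_mono {I I' : ℕ → Ideal (MvPolynomial (Fin d) 𝕜)}
    {J J' : Fin r → ℕ → Ideal (MvPolynomial (Fin d) 𝕜)} (hI : I ≤ I') (hJ : J ≤ J') :
    GammaHatSet 𝕜 I J c n0 n ⊆ GammaHatSet 𝕜 I' J' c n0 n :=
  fun _ hq => ⟨Ideal.mul_mono (hI _) (Finset.prod_le_prod' fun i _ => hJ i _) hq.1, hq.2⟩

variable {I : ℕ → Ideal (MvPolynomial (Fin d) 𝕜)} {J : Fin r → ℕ → Ideal (MvPolynomial (Fin d) 𝕜)}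
  {It : ℕ → ℕ → Ideal (MvPolynomial (Fin d) 𝕜)}
  {Jt : ℕ → Fin r → ℕ → Ideal (MvPolynomial (Fin d) 𝕜)}

/-- A point of level `m` only involves the ideals of index at most `m (n₀ + |𝐧|)`. -/
theorem gammaHatSet_eq_iUnion (hIt : ∀ a, It a ≤ I) (hJt : ∀ a, Jt a ≤ J)
    (hIt_eq : ∀ a m, m ≤ a → It a m = I m) (hJt_eq : ∀ a i m, m ≤ a → Jt a i m = J i m) :
    GammaHatSet 𝕜 I J c n0 n = ⋃ a, GammaHatSet 𝕜 (It a) (Jt a) c n0 n := by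
  refine subset_antisymm (fun q hq => Set.mem_iUnion.2 ⟨q.2 * (n0 + ∑ i, n i), ?_⟩)
    (Set.iUnion_subset fun a => gammaHatSet_mono (hIt a) (hJt a))
  have hn : ∀ i, q.2 * n i ≤ q.2 * (n0 + ∑ i, n i) := fun i =>
    Nat.mul_le_mul_left _ ((Finset.single_le_sum (fun i _ => Nat.zero_le (n i))
      (Finset.mem_univ i)).trans (Nat.le_add_left _ _))
  refine ⟨?_, hq.2⟩
  rw [hIt_eq _ _ (Nat.mul_le_mul_left _ (Nat.le_add_right _ _)),
    Finset.prod_congr rfl fun i _ => hJt_eq _ i _ (hn i)]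
  exact hq.1

theorem exists_volDelta_gammaHatSet_approx (hIt : ∀ a, It a ≤ I) (hJt : ∀ a, Jt a ≤ J)
    (hIt_mono : Monotone It) (hJt_mono : Monotone Jt)
    (hIt_eq : ∀ a m, m ≤ a → It a m = I m) (hJt_eq : ∀ a i m, m ≤ a → Jt a i m = J i m)
    {ε : ℝ} (hε : 0 < ε) :
    ∃ a0, ∀ a, a0 ≤ a →
      volDelta (GammaHatSet 𝕜 I J c n0 n) ≥ volDelta (GammaHatSet 𝕜 (It a) (Jt a) c n0 n) ∧
        volDelta (GammaHatSet 𝕜 (It a) (Jt a) c n0 n) ≥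
          volDelta (GammaHatSet 𝕜 I J c n0 n) - ε := by
  rw [gammaHatSet_eq_iUnion hIt hJt hIt_eq hJt_eq]
  refine exists_volDelta_approx (M := c * (n0 + ∑ i, n i))
    (fun a b h => gammaHatSet_mono (hIt_mono h) (hJt_mono h)) (fun q hq => ?_) hε
  obtain ⟨a, hq⟩ := Set.mem_iUnion.1 hq
  exact hq.2.trans_eq (by ring)

end Gamma

theorem statement13_general {𝕜 : Type*} [Field 𝕜] (d r : ℕ)
    (I : ℕ → Ideal (MvPolynomial (Fin d) 𝕜))
    (J : Fin r → ℕ → Ideal (MvPolynomial (Fin d) 𝕜)) (c : ℕ)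
    (hI : IsGradedFamily I)
    (hJ : ∀ i, IsGradedFamily (J i))
    (It : ℕ → ℕ → Ideal (MvPolynomial (Fin d) 𝕜))
    (Jt : Fin r → ℕ → ℕ → Ideal (MvPolynomial (Fin d) 𝕜))
    (hIt1 : ∀ a n, n ≤ a → It a n = I n)
    (hIt2 : ∀ a n, a < n → It a n = ∑ i ∈ Finset.Ioo 0 n, It a i * It a (n - i))
    (hJt1 : ∀ i a n, n ≤ a → Jt i a n = J i n)
    (hJt2 : ∀ i a n, a < n → Jt i a n = ∑ k ∈ Finset.Ioo 0 n, Jt i a k * Jt i a (n - k))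
    (n0 : ℕ) (n : Fin r → ℕ) (ε : ℝ) (hε : 0 < ε) :
    ∃ a0 : ℕ, ∀ a : ℕ, a0 ≤ a →
      (volDelta (GammaSet 𝕜 J c n0 n) ≥ volDelta (GammaSet 𝕜 (fun i => Jt i a) c n0 n) ∧
        volDelta (GammaSet 𝕜 (fun i => Jt i a) c n0 n) ≥ volDelta (GammaSet 𝕜 J c n0 n) - ε) ∧
      (volDelta (GammaHatSet 𝕜 I J c n0 n) ≥
          volDelta (GammaHatSet 𝕜 (It a) (fun i => Jt i a) c n0 n) ∧
        volDelta (GammaHatSet 𝕜 (It a) (fun i => Jt i a) c n0 n) ≥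
          volDelta (GammaHatSet 𝕜 I J c n0 n) - ε) := by
  have hJt_le : ∀ a, (fun i => Jt i a) ≤ J := fun a i =>
    truncation_le (hJ i).2 (hJt1 i) (hJt2 i) a
  have hJt_mono : Monotone fun a i => Jt i a := fun _ _ h i =>
    truncation_monotone (hJ i).2 (hJt1 i) (hJt2 i) h
  have hJt_eq : ∀ a i m, m ≤ a → Jt i a m = J i m := fun a i m => hJt1 i a m
  obtain ⟨a1, ha1⟩ := exists_volDelta_gammaHatSet_approx (c := c) (n0 := n0) (n := n)
    (fun _ => le_rfl) hJt_le monotone_const hJt_mono (fun _ _ _ => rfl) hJt_eq hε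
  obtain ⟨a2, ha2⟩ := exists_volDelta_gammaHatSet_approx (truncation_le hI.2 hIt1 hIt2) hJt_le
    (truncation_monotone hI.2 hIt1 hIt2) hJt_mono hIt1 hJt_eq hε
  simp only [gammaSet_eq_gammaHatSet_top]
  exact ⟨max a1 a2, fun a ha => ⟨ha1 a (le_of_max_le_left ha), ha2 a (le_of_max_le_right ha)⟩⟩

/-- **Approximation by truncated families.**
Let `It a` (resp. `Jt i a`) be the Noetherian graded family generated by `I_1, …, I_a`
(resp. `J(i)_1, …, J(i)_a`): `It a n = I n` for `n ≤ a` and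
`It a n = Σ_{0<i<n} It a i · It a (n−i)` for `n > a`.  Then for fixed `n₀, 𝐧, ε > 0` there
exists `a₀` such that for all `a ≥ a₀`,
`Vol_d(Δ(Γ_{n₀,𝐧})) ≥ Vol_d(Δ(Γ_{a,n₀,𝐧})) ≥ Vol_d(Δ(Γ_{n₀,𝐧})) − ε` and
`Vol_d(Δ(Γ̂_{n₀,𝐧})) ≥ Vol_d(Δ(Γ̂_{a,n₀,𝐧})) ≥ Vol_d(Δ(Γ̂_{n₀,𝐧})) − ε`. -/
theorem statement13 {𝕜 : Type*} [Field 𝕜] (d r : ℕ) (hd : 0 < d)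
    (I : ℕ → Ideal (MvPolynomial (Fin d) 𝕜))
    (J : Fin r → ℕ → Ideal (MvPolynomial (Fin d) 𝕜)) (β c : ℕ)
    (hI : IsGradedFamily I)
    (hImon : ∀ n, IsMonomialIdeal (I n))
    (hIprim : ∀ n, 0 < n → IsMPrimary (I n))
    (hJ : ∀ i, IsGradedFamily (J i))
    (hJb : ∀ i n, IsMonomialBounded (J i n) (β * n))
    (hc : β < c)
    (hcap : ∀ (n0 : ℕ) (n : Fin r → ℕ),
      mId 𝕜 d ^ (c * (n0 + ∑ i, n i)) ⊓ (∏ i, J i (n i)) =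
        mId 𝕜 d ^ (c * (n0 + ∑ i, n i)) ⊓ (I n0 * ∏ i, J i (n i)))
    (It : ℕ → ℕ → Ideal (MvPolynomial (Fin d) 𝕜))
    (Jt : Fin r → ℕ → ℕ → Ideal (MvPolynomial (Fin d) 𝕜))
    (hIt1 : ∀ a n, n ≤ a → It a n = I n)
    (hIt2 : ∀ a n, a < n → It a n = ∑ i ∈ Finset.Ioo 0 n, It a i * It a (n - i))
    (hJt1 : ∀ i a n, n ≤ a → Jt i a n = J i n)
    (hJt2 : ∀ i a n, a < n → Jt i a n = ∑ k ∈ Finset.Ioo 0 n, Jt i a k * Jt i a (n - k))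
    (n0 : ℕ) (n : Fin r → ℕ) (ε : ℝ) (hε : 0 < ε) :
    ∃ a0 : ℕ, ∀ a : ℕ, a0 ≤ a →
      (volDelta (GammaSet 𝕜 J c n0 n) ≥ volDelta (GammaSet 𝕜 (fun i => Jt i a) c n0 n) ∧
        volDelta (GammaSet 𝕜 (fun i => Jt i a) c n0 n) ≥ volDelta (GammaSet 𝕜 J c n0 n) - ε) ∧
      (volDelta (GammaHatSet 𝕜 I J c n0 n) ≥
          volDelta (GammaHatSet 𝕜 (It a) (fun i => Jt i a) c n0 n) ∧
        volDelta (GammaHatSet 𝕜 (It a) (fun i => Jt i a) c n0 n) ≥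
          volDelta (GammaHatSet 𝕜 I J c n0 n) - ε) :=
  statement13_general d r I J c hI hJ It Jt hIt1 hIt2 hJt1 hJt2 n0 n ε hε
end
end

section
/- Suppose the graded families 𝕁(1),…,𝕁(r) are in addition graded families of 𝔪-primary monomial ideals. Let G(n_0,𝐧) be the homogeneous degree-d polynomial with G(n_0,𝐧) = lim_{m→∞} dim_𝕜( 𝐉_{m𝐧} / I_{m n_0}𝐉_{m𝐧} ) / m^d, let G'(n_0,𝐧) be the homogeneous degree-d polynomial with G'(n_0,𝐧) = lim_{m→∞} dim_𝕜( R / I_{m n_0}𝐉_{m𝐧} ) / m^d (which exists by the theorem in the 𝔪-primary case applied to the r+1 families 𝕀,𝕁(1),…,𝕁(r)), and let H(𝐧) be the homogeneous degree-d polynomial with H(𝐧) = lim_{m→∞} dim_𝕜( R / 𝐉_{m𝐧} ) / m^d. Then G'(n_0,𝐧) = G(n_0,𝐧) + H(𝐧) for all (n_0,𝐧) ∈ ℕ^{r+1}. Consequently, for each (d_0,𝐝) ∈ ℕ^{r+1} with d_0+|𝐝| = d: (i) if d_0 = 0 then e_{(d_0,𝐝)}(𝕀,𝕁(1),…,𝕁(r))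 = e_𝐝(𝕁(1),…,𝕁(r)); (ii) if d_0 > 0 then e_{(d_0,𝐝)}(𝕀,𝕁(1),…,𝕁(r)) = e_{(d_0−1,𝐝)}(𝕀 | 𝕁(1),…,𝕁(r)). -/
open Filter MvPolynomial Pointwise MeasureTheory

noncomputable section

/-! For every `m` the ideals `I_{mn₀}𝐉_{m𝐧} ⊆ 𝐉_{m𝐧}` have finite colength, so
`dim R/I_{mn₀}𝐉_{m𝐧} = dim 𝐉_{m𝐧}/I_{mn₀}𝐉_{m𝐧} + dim R/𝐉_{m𝐧}`; dividing by `m^d` and passing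
to the limit gives `G' = G + H` at every point of `ℕ^{r+1}`, hence as polynomials, since a real
polynomial is determined by its values on `ℕ^k`. As `I_0 = R`, `G` vanishes on `n₀ = 0`, so `G`
has no monomial free of `x₀`, while `H` has only such monomials; comparing coefficients gives the
rest. -/

namespace MvPolynomial

section Evaluation

variable {R : Type*} [CommRing R] [IsDomain R] [CharZero R]

theorem eq_of_eval_natCast_eq {σ : Type*} {p q : MvPolynomial σ R}
    (h : ∀ n : σ → ℕ, eval (fun i => (n i : R)) p = eval (fun i => (n i : R)) q) : p = q := by
  refine funext_set (fun _ => Set.range Nat.cast)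
    (fun _ => Set.infinite_range_of_injective Nat.cast_injective) fun x hx => ?_
  choose n hn using fun i => hx i trivial
  simpa only [hn] using h n

theorem coeff_cons_zero_eq_zero_of_eval_cons_zero {r : ℕ} {p : MvPolynomial (Fin (r + 1)) R}
    (h : ∀ n : Fin r → ℕ, eval (Fin.cons 0 fun i => (n i : R)) p = 0) (D : Fin r →₀ ℕ) :
    coeff (Finsupp.cons 0 D) p = 0 := by
  suffices (finSuccEquiv R r p).coeff 0 = 0 by
    rw [← finSuccEquiv_coeff_coeff, this, coeff_zero]
  refine eq_of_eval_natCast_eq fun n => ?_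
  rw [map_zero, ← h n, eval_eq_eval_mv_eval', ← Polynomial.coeff_zero_eq_eval_zero,
    Polynomial.coeff_map]

theorem eq_add_rename_succ_of_eval_natCast {r : ℕ} {G G' : MvPolynomial (Fin (r + 1)) R}
    {H : MvPolynomial (Fin r) R}
    (h : ∀ (n0 : ℕ) (n : Fin r → ℕ), eval (Fin.cons (n0 : R) fun i => (n i : R)) G' =
      eval (Fin.cons (n0 : R) fun i => (n i : R)) G + eval (fun i => (n i : R)) H) :
    G' = G + rename Fin.succ H := by
  refine eq_of_eval_natCast_eq fun n => ?_
  have hn : (fun i => (n i : R)) = Fin.cons (n 0 : R) fun i => (n i.succ : R) :=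
    (Fin.cons_self_tail _).symm
  rw [hn, map_add, eval_rename, h]
  rfl

end Evaluation

section Rename

variable {S : Type*} [CommSemiring S] {r : ℕ}

theorem finSuccEquiv_rename_succ (p : MvPolynomial (Fin r) S) :
    finSuccEquiv S r (rename Fin.succ p) = Polynomial.C p := by
  induction p using MvPolynomial.induction_on with
  | C a =>
    rw [rename_C, ← algebraMap_eq, AlgEquiv.commutes, Polynomial.algebraMap_apply, algebraMap_eq]
  | add p q hp hq => simp [hp, hq]
  | mul_X p i hp => simp [hp, finSuccEquiv_X_succ]

theorem coeff_cons_rename_succ (p : MvPolynomial (Fin r) S) (a : ℕ) (D : Fin r →₀ ℕ) :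
    coeff (Finsupp.cons a D) (rename Fin.succ p) = if a = 0 then coeff D p else 0 := by
  rw [← finSuccEquiv_coeff_coeff, finSuccEquiv_rename_succ, Polynomial.coeff_C]
  split_ifs <;> simp

end Rename

theorem restrictSupport_sup_restrictSupport_compl (S : Type*) [CommSemiring S] {σ : Type*}
    (s : Set (σ →₀ ℕ)) : restrictSupport S s ⊔ restrictSupport S sᶜ = ⊤ := by
  rw [restrictSupport_eq_span, restrictSupport_eq_span, ← Submodule.span_union, ← Set.image_union,
    Set.union_compl_self, ← restrictSupport_eq_span, restrictSupport_univ]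

theorem finite_quotient_of_pow_idealOfVars_le {K σ : Type*} [Field K] [Finite σ]
    {C : Ideal (MvPolynomial σ K)} {N : ℕ} (hN : idealOfVars σ K ^ N ≤ C) :
    Module.Finite K (MvPolynomial σ K ⧸ C) := by
  have hsup : restrictTotalDegree σ K N ⊔ C.restrictScalars K = ⊤ := by
    refine eq_top_mono (sup_le_sup_left ?_ _) (restrictSupport_sup_restrictSupport_compl K _)
    calc restrictSupport K {n : σ →₀ ℕ | (n.sum fun _ e => e) ≤ N}ᶜ
        ≤ (idealOfVars σ K ^ N).restrictScalars K := by
          rw [pow_idealOfVars, restrictScalars_restrictSupportIdeal]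
          exact restrictSupport_mono K fun _ hn => le_of_not_ge (show ¬ _ ≤ N from hn)
      _ ≤ C.restrictScalars K := Submodule.restrictScalars_mono K hN
  have : Module.Finite K (MvPolynomial σ K ⧸ C.restrictScalars K) := by
    refine Module.Finite.of_surjective
      ((C.restrictScalars K).mkQ ∘ₗ (restrictTotalDegree σ K N).subtype) ?_
    rw [← LinearMap.range_eq_top, LinearMap.range_comp, Submodule.range_subtype,
      Submodule.map_mkQ_eq_top, sup_comm, hsup]
  exact Module.Finite.equiv (Submodule.Quotient.restrictScalarsEquiv K C)

end MvPolynomial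

theorem Finsupp.equivFunOnFinite_symm_cons {M : Type*} [Zero M] {r : ℕ} (a : M) (D : Fin r → M) :
    Finsupp.equivFunOnFinite.symm (Fin.cons a D : Fin (r + 1) → M) =
      Finsupp.cons a (Finsupp.equivFunOnFinite.symm D) := rfl

theorem Submodule.finrank_quotient_eq_finrank_quotient_comap_add {K M : Type*} [DivisionRing K]
    [AddCommGroup M] [Module K M] {A B : Submodule K M} (hBA : B ≤ A) [Module.Finite K (M ⧸ B)] :
    Module.finrank K (M ⧸ B) =
      Module.finrank K (A ⧸ B.comap A.subtype) + Module.finrank K (M ⧸ A) := by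
  have hker : LinearMap.ker (B.mkQ ∘ₗ A.subtype) = B.comap A.subtype := by
    rw [LinearMap.ker_comp, ker_mkQ]
  have hrange : LinearMap.range (B.mkQ ∘ₗ A.subtype) = A.map B.mkQ := by
    rw [LinearMap.range_comp, range_subtype]
  let e : (A ⧸ B.comap A.subtype) ≃ₗ[K] A.map B.mkQ :=
    (quotEquivOfEq _ _ hker.symm).trans
      ((B.mkQ ∘ₗ A.subtype).quotKerEquivRange.trans (LinearEquiv.ofEq _ _ hrange))
  rw [← (quotientQuotientEquivQuotient B A hBA).finrank_eq, e.finrank_eq, add_comm,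
    finrank_quotient_add_finrank]

section QuotDim

variable {𝕜 R : Type*} [Field 𝕜] [CommRing R] [Algebra 𝕜 R]

theorem quotDim_self (A : Ideal R) : quotDim 𝕜 A A = 0 := by
  rw [quotDim, Submodule.comap_subtype_self]
  exact Module.finrank_eq_zero_of_subsingleton 𝕜 _

theorem finrank_quotient_eq_quotDim_add {A B : Ideal R} (hBA : B ≤ A)
    [Module.Finite 𝕜 (R ⧸ B)] :
    Module.finrank 𝕜 (R ⧸ B) = quotDim 𝕜 A B + Module.finrank 𝕜 (R ⧸ A) := by
  have := Module.Finite.equiv (Submodule.Quotient.restrictScalarsEquiv 𝕜 B).symm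
  rw [← (Submodule.Quotient.restrictScalarsEquiv 𝕜 B).finrank_eq,
    ← (Submodule.Quotient.restrictScalarsEquiv 𝕜 A).finrank_eq, quotDim]
  exact Submodule.finrank_quotient_eq_finrank_quotient_comap_add
    (Submodule.restrictScalars_mono 𝕜 hBA)

end QuotDim

namespace Ideal

variable {R : Type*} [CommSemiring R] {M : Ideal R}

theorem exists_pow_le_mul {A B : Ideal R} (hA : ∃ k, M ^ k ≤ A) (hB : ∃ k, M ^ k ≤ B) :
    ∃ k, M ^ k ≤ A * B := by
  obtain ⟨k, hk⟩ := hA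
  obtain ⟨l, hl⟩ := hB
  exact ⟨k + l, pow_add M k l ▸ mul_mono hk hl⟩

theorem exists_pow_le_prod {ι : Type*} (s : Finset ι) {A : ι → Ideal R}
    (h : ∀ i ∈ s, ∃ k, M ^ k ≤ A i) : ∃ k, M ^ k ≤ ∏ i ∈ s, A i :=
  Finset.prod_induction _ (fun C => ∃ k, M ^ k ≤ C) (fun _ _ => exists_pow_le_mul)
    ⟨0, (pow_zero M).le⟩ h

end Ideal

theorem IsGradedFamily.exists_pow_mId_le {𝕜 : Type*} [Field 𝕜] {d : ℕ}
    {I : ℕ → Ideal (MvPolynomial (Fin d) 𝕜)} (hI : IsGradedFamily I)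
    (hprim : ∀ n, 0 < n → IsMPrimary (I n)) (n : ℕ) : ∃ k, mId 𝕜 d ^ k ≤ I n := by
  rcases Nat.eq_zero_or_pos n with rfl | hn
  · exact ⟨0, by rw [hI.1]; exact le_top⟩
  · exact (hprim n hn).2

theorem statement19_general {𝕜 : Type*} [Field 𝕜] (d r : ℕ)
    (I : ℕ → Ideal (MvPolynomial (Fin d) 𝕜))
    (J : Fin r → ℕ → Ideal (MvPolynomial (Fin d) 𝕜))
    (hI : IsGradedFamily I)
    (hIprim : ∀ n, 0 < n → IsMPrimary (I n))
    (hJ : ∀ i, IsGradedFamily (J i))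
    (hJprim : ∀ i n, 0 < n → IsMPrimary (J i n))
    (G G' : MvPolynomial (Fin (r + 1)) ℝ) (H : MvPolynomial (Fin r) ℝ)
    (hGlim : ∀ (n0 : ℕ) (n : Fin r → ℕ),
      Tendsto
        (fun m : ℕ =>
          (quotDim 𝕜 (∏ i, J i (m * n i)) (I (m * n0) * ∏ i, J i (m * n i)) : ℝ) /
            (m : ℝ) ^ d)
        atTop (nhds (MvPolynomial.eval (Fin.cons (n0 : ℝ) fun i => (n i : ℝ)) G)))
    (hG'lim : ∀ (n0 : ℕ) (n : Fin r → ℕ),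
      Tendsto
        (fun m : ℕ =>
          (Module.finrank 𝕜
              (MvPolynomial (Fin d) 𝕜 ⧸ (I (m * n0) * ∏ i, J i (m * n i))) : ℝ) /
            (m : ℝ) ^ d)
        atTop (nhds (MvPolynomial.eval (Fin.cons (n0 : ℝ) fun i => (n i : ℝ)) G')))
    (hHlim : ∀ n : Fin r → ℕ,
      Tendsto
        (fun m : ℕ =>
          (Module.finrank 𝕜 (MvPolynomial (Fin d) 𝕜 ⧸ (∏ i, J i (m * n i))) : ℝ) /
            (m : ℝ) ^ d)
        atTop (nhds (MvPolynomial.eval (fun i => (n i : ℝ)) H))) :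
    (∀ (n0 : ℕ) (n : Fin r → ℕ),
      MvPolynomial.eval (Fin.cons (n0 : ℝ) fun i => (n i : ℝ)) G' =
        MvPolynomial.eval (Fin.cons (n0 : ℝ) fun i => (n i : ℝ)) G +
          MvPolynomial.eval (fun i => (n i : ℝ)) H) ∧
    (∀ D : Fin r → ℕ, (∑ i, D i) = d →
      ((∏ i, Nat.factorial (D i) : ℕ) : ℝ) *
          G'.coeff (Finsupp.equivFunOnFinite.symm (Fin.cons 0 D)) =
        ((∏ i, Nat.factorial (D i) : ℕ) : ℝ) *
          H.coeff (Finsupp.equivFunOnFinite.symm D)) ∧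
    (∀ (d0 : ℕ) (D : Fin r → ℕ), 0 < d0 → d0 + ∑ i, D i = d →
      ((Nat.factorial d0 * ∏ i, Nat.factorial (D i) : ℕ) : ℝ) *
          G'.coeff (Finsupp.equivFunOnFinite.symm (Fin.cons d0 D)) =
        ((Nat.factorial d0 * ∏ i, Nat.factorial (D i) : ℕ) : ℝ) *
          G.coeff (Finsupp.equivFunOnFinite.symm (Fin.cons d0 D))) := by
  have hfin : ∀ (m n0 : ℕ) (n : Fin r → ℕ),
      Module.Finite 𝕜 (MvPolynomial (Fin d) 𝕜 ⧸ (I (m * n0) * ∏ i, J i (m * n i))) :=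
    fun m n0 n =>
      -- `mId 𝕜 d` is `idealOfVars (Fin d) 𝕜` by definition.
      have ⟨_, hk⟩ := Ideal.exists_pow_le_mul (hI.exists_pow_mId_le hIprim (m * n0))
        (Ideal.exists_pow_le_prod _ fun i _ => (hJ i).exists_pow_mId_le (hJprim i) (m * n i))
      MvPolynomial.finite_quotient_of_pow_idealOfVars_le hk
  have hsum : ∀ (n0 : ℕ) (n : Fin r → ℕ),
      MvPolynomial.eval (Fin.cons (n0 : ℝ) fun i => (n i : ℝ)) G' =
        MvPolynomial.eval (Fin.cons (n0 : ℝ) fun i => (n i : ℝ)) G +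
          MvPolynomial.eval (fun i => (n i : ℝ)) H := fun n0 n =>
    tendsto_nhds_unique (hG'lim n0 n) (((hGlim n0 n).add (hHlim n)).congr fun m => by
      rw [finrank_quotient_eq_quotDim_add Ideal.mul_le_right, Nat.cast_add, add_div])
  -- `I 0 = R`, so every term of the sequence in `hGlim 0 n` is zero.
  have hG0 : ∀ n : Fin r → ℕ, MvPolynomial.eval (Fin.cons 0 fun i => (n i : ℝ)) G = 0 :=
    fun n => by simpa [hI.1, quotDim_self, eq_comm] using hGlim 0 n
  have hG' := MvPolynomial.eq_add_rename_succ_of_eval_natCast hsum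
  refine ⟨hsum, fun D _ => ?_, fun d0 D hd0 _ => ?_⟩
  · rw [Finsupp.equivFunOnFinite_symm_cons, hG', coeff_add,
      MvPolynomial.coeff_cons_zero_eq_zero_of_eval_cons_zero hG0, coeff_cons_rename_succ,
      if_pos rfl, zero_add]
  · rw [Finsupp.equivFunOnFinite_symm_cons, hG', coeff_add, coeff_cons_rename_succ,
      if_neg hd0.ne', add_zero]

/-- **Compatibility of the two notions of mixed multiplicities in the `𝔪`-primary case.**
If the families `𝕁(1), …, 𝕁(r)` are moreover `𝔪`-primary, and `G, G', H` are the homogeneous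
degree-`d` polynomials computing respectively
`lim_m dim_𝕜(𝐉_{m𝐧}/I_{mn₀}𝐉_{m𝐧})/m^d`, `lim_m dim_𝕜(R/I_{mn₀}𝐉_{m𝐧})/m^d` and
`lim_m dim_𝕜(R/𝐉_{m𝐧})/m^d`, then `G'(n₀,𝐧) = G(n₀,𝐧) + H(𝐧)` on `ℕ^{r+1}`.
Consequently, for `(d₀,𝐝)` with `d₀+|𝐝| = d`: if `d₀ = 0` then
`e_{(0,𝐝)}(𝕀,𝕁(1),…,𝕁(r)) = e_𝐝(𝕁(1),…,𝕁(r))`, and if `d₀ > 0` then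
`e_{(d₀,𝐝)}(𝕀,𝕁(1),…,𝕁(r)) = e_{(d₀−1,𝐝)}(𝕀|𝕁(1),…,𝕁(r))` (the mixed multiplicities being
the coefficients of `G', H, G` scaled by the corresponding factorials). -/
theorem statement19 {𝕜 : Type*} [Field 𝕜] (d r : ℕ) (hd : 0 < d)
    (I : ℕ → Ideal (MvPolynomial (Fin d) 𝕜))
    (J : Fin r → ℕ → Ideal (MvPolynomial (Fin d) 𝕜)) (β : ℕ)
    (hI : IsGradedFamily I)
    (hImon : ∀ n, IsMonomialIdeal (I n))
    (hIprim : ∀ n, 0 < n → IsMPrimary (I n))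
    (hJ : ∀ i, IsGradedFamily (J i))
    (hJb : ∀ i n, IsMonomialBounded (J i n) (β * n))
    (hJprim : ∀ i n, 0 < n → IsMPrimary (J i n))
    (G G' : MvPolynomial (Fin (r + 1)) ℝ) (H : MvPolynomial (Fin r) ℝ)
    (hGhom : G.IsHomogeneous d) (hG'hom : G'.IsHomogeneous d) (hHhom : H.IsHomogeneous d)
    (hGlim : ∀ (n0 : ℕ) (n : Fin r → ℕ),
      Tendsto
        (fun m : ℕ =>
          (quotDim 𝕜 (∏ i, J i (m * n i)) (I (m * n0) * ∏ i, J i (m * n i)) : ℝ) /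
            (m : ℝ) ^ d)
        atTop (nhds (MvPolynomial.eval (Fin.cons (n0 : ℝ) fun i => (n i : ℝ)) G)))
    (hG'lim : ∀ (n0 : ℕ) (n : Fin r → ℕ),
      Tendsto
        (fun m : ℕ =>
          (Module.finrank 𝕜
              (MvPolynomial (Fin d) 𝕜 ⧸ (I (m * n0) * ∏ i, J i (m * n i))) : ℝ) /
            (m : ℝ) ^ d)
        atTop (nhds (MvPolynomial.eval (Fin.cons (n0 : ℝ) fun i => (n i : ℝ)) G')))
    (hHlim : ∀ n : Fin r → ℕ,
      Tendsto
        (fun m : ℕ =>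
          (Module.finrank 𝕜 (MvPolynomial (Fin d) 𝕜 ⧸ (∏ i, J i (m * n i))) : ℝ) /
            (m : ℝ) ^ d)
        atTop (nhds (MvPolynomial.eval (fun i => (n i : ℝ)) H))) :
    (∀ (n0 : ℕ) (n : Fin r → ℕ),
      MvPolynomial.eval (Fin.cons (n0 : ℝ) fun i => (n i : ℝ)) G' =
        MvPolynomial.eval (Fin.cons (n0 : ℝ) fun i => (n i : ℝ)) G +
          MvPolynomial.eval (fun i => (n i : ℝ)) H) ∧
    (∀ D : Fin r → ℕ, (∑ i, D i) = d →
      ((∏ i, Nat.factorial (D i) : ℕ) : ℝ) *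
          G'.coeff (Finsupp.equivFunOnFinite.symm (Fin.cons 0 D)) =
        ((∏ i, Nat.factorial (D i) : ℕ) : ℝ) *
          H.coeff (Finsupp.equivFunOnFinite.symm D)) ∧
    (∀ (d0 : ℕ) (D : Fin r → ℕ), 0 < d0 → d0 + ∑ i, D i = d →
      ((Nat.factorial d0 * ∏ i, Nat.factorial (D i) : ℕ) : ℝ) *
          G'.coeff (Finsupp.equivFunOnFinite.symm (Fin.cons d0 D)) =
        ((Nat.factorial d0 * ∏ i, Nat.factorial (D i) : ℕ) : ℝ) *
          G.coeff (Finsupp.equivFunOnFinite.symm (Fin.cons d0 D))) :=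
  statement19_general d r I J hI hIprim hJ hJprim G G' H hGlim hG'lim hHlim
end
end
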